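/- Let J = [[0,1],[−1,0]]. For a 2×2 real matrix P with det P = 1 and I − P invertible, define the Cayley transform M_P = ½·J·(I+P)·(I−P)⁻¹; then M_P is a symmetric matrix. Suppose P(k), k ∈ ℕ, is a family of 2×2 real matrices with det P(k) = 1 such that the (1,1)-entry a(k) of P(k) satisfies |a(k)| → ∞ while the (1,2), (2,1) and (2,2) entries of P(k) are all o(a(k)) as k → ∞. Then for all sufficiently large k the matrix I − P(k) is invertible, and M_{P(k)} → [[0,1/2],[1/2,0]] as k → ∞. Consequently, if Q(k) is a second family with the same properties, then for all sufficiently large k the symmetric matrix M_{P(k)} + M_{Q(k)} has negative determinant, hence one positive and one negative eigenvalue, so its signature is zero. -/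

import Mathlib

open Filter Topology Polynomial Matrix

/-- The Cayley transform `M_P = ½ · J · (I + P) · (I − P)⁻¹`, with `J = [[0,1],[−1,0]]`. -/
noncomputable def cayley (P : Matrix (Fin 2) (Fin 2) ℝ) : Matrix (Fin 2) (Fin 2) ℝ :=
  (1 / 2 : ℝ) • ((!![0, 1; -1, 0] : Matrix (Fin 2) (Fin 2) ℝ) * (1 + P) * (1 - P)⁻¹)

lemma det_one_sub (P : Matrix (Fin 2) (Fin 2) ℝ) (hdet : P.det = 1) :
    (1 - P).det = 2 - P 0 0 - P 1 1 := by
  rw [Matrix.det_fin_two] at hdet ⊢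
  simp only [Matrix.sub_apply, Matrix.one_apply_eq, Matrix.one_apply_ne (by decide : (0:Fin 2) ≠ 1),
    Matrix.one_apply_ne (by decide : (1:Fin 2) ≠ 0)]
  nlinarith [hdet]

lemma cayley_eq (P : Matrix (Fin 2) (Fin 2) ℝ) (hdet : P.det = 1)
    (hΔ : (2 - P 0 0 - P 1 1) ≠ 0) :
    cayley P = !![P 1 0 / (2 - P 0 0 - P 1 1), (P 1 1 - P 0 0) / (2 * (2 - P 0 0 - P 1 1));
      (P 1 1 - P 0 0) / (2 * (2 - P 0 0 - P 1 1)), -(P 0 1) / (2 - P 0 0 - P 1 1)] := by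
  set a := P 0 0; set b := P 0 1; set c := P 1 0; set d := P 1 1
  have hP : P = !![a, b; c, d] := Matrix.eta_fin_two P
  have h1 : (1 : Matrix (Fin 2) (Fin 2) ℝ) - P = !![1 - a, -b; -c, 1 - d] := by
    rw [hP, Matrix.one_fin_two]
    ext i j
    fin_cases i <;> fin_cases j <;> simp
  have hd2 : a * d - b * c = 1 := by rw [Matrix.det_fin_two] at hdet; exact hdet
  have hdet1 : ((1 : Matrix (Fin 2) (Fin 2) ℝ) - P).det = 2 - a - d := det_one_sub P hdet
  have hinv : ((1 : Matrix (Fin 2) (Fin 2) ℝ) - P)⁻¹ = (2 - a - d)⁻¹ • !![1 - d, b; c, 1 - a] := by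
    rw [Matrix.inv_def, hdet1, h1, Matrix.adjugate_fin_two, Ring.inverse_eq_inv']
    norm_num
  rw [cayley, hinv, hP, Matrix.one_fin_two]
  ext i j
  fin_cases i <;> fin_cases j <;>
    simp [Matrix.mul_apply, Fin.sum_univ_two, Matrix.smul_apply] <;>
    field_simp <;> ring_nf <;> nlinarith [hd2]

lemma partb (P : ℕ → Matrix (Fin 2) (Fin 2) ℝ)
    (hdet : ∀ k, (P k).det = 1)
    (hA : Tendsto (fun k => |P k 0 0|) atTop atTop)
    (hB : Tendsto (fun k => P k 0 1 / P k 0 0) atTop (𝓝 0))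
    (hC : Tendsto (fun k => P k 1 0 / P k 0 0) atTop (𝓝 0))
    (hD : Tendsto (fun k => P k 1 1 / P k 0 0) atTop (𝓝 0)) :
    (∀ᶠ k in atTop, IsUnit (1 - P k)) ∧
      Tendsto (fun k => cayley (P k)) atTop
        (𝓝 (!![0, 1 / 2; 1 / 2, 0] : Matrix (Fin 2) (Fin 2) ℝ)) := by
  set g : ℕ → ℝ := fun k => 2 / P k 0 0 - 1 - P k 1 1 / P k 0 0 with hgdef
  have h2a : Tendsto (fun k => 2 / P k 0 0) atTop (𝓝 0) := by
    rw [tendsto_zero_iff_abs_tendsto_zero]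
    simp only [Function.comp_def]
    have : (fun k => |2 / P k 0 0|) = fun k => 2 / |P k 0 0| := by
      funext k; rw [abs_div]; norm_num
    rw [this]
    exact tendsto_const_nhds.div_atTop hA
  have hg : Tendsto g atTop (𝓝 (-1)) := by
    have h := (h2a.sub (tendsto_const_nhds (x := (1:ℝ)))).sub hD
    norm_num at h
    exact h
  have hane : ∀ᶠ k in atTop, P k 0 0 ≠ 0 := by
    filter_upwards [hA.eventually_ge_atTop 1] with k hk
    intro h; rw [h] at hk; simp at hk; linarith
  have hgne : ∀ᶠ k in atTop, g k < 0 :=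
    hg.eventually_lt_const (by norm_num)
  have hΔeq : ∀ᶠ k in atTop, 2 - P k 0 0 - P k 1 1 = P k 0 0 * g k := by
    filter_upwards [hane] with k hk
    rw [hgdef]; field_simp
  have hΔne : ∀ᶠ k in atTop, 2 - P k 0 0 - P k 1 1 ≠ 0 := by
    filter_upwards [hΔeq, hane, hgne] with k h1 h2 h3
    rw [h1]; exact mul_ne_zero h2 h3.ne
  constructor
  · filter_upwards [hΔne] with k hk
    rw [Matrix.isUnit_iff_isUnit_det, isUnit_iff_ne_zero, det_one_sub _ (hdet k)]
    exact hk
  · set F : ℕ → Matrix (Fin 2) (Fin 2) ℝ := fun k =>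
      !![(P k 1 0 / P k 0 0) / g k, (P k 1 1 / P k 0 0 - 1) / (2 * g k);
         (P k 1 1 / P k 0 0 - 1) / (2 * g k), -(P k 0 1 / P k 0 0) / g k] with hFdef
    have hEq : ∀ᶠ k in atTop, cayley (P k) = F k := by
      filter_upwards [hΔeq, hΔne, hane, hgne] with k h1 h2 h3 h4
      rw [cayley_eq _ (hdet k) h2, hFdef]
      have hg0 : g k ≠ 0 := h4.ne
      ext i j
      fin_cases i <;> fin_cases j <;> simp [h1] <;>
        first
          | rw [div_div]
          | rw [div_sub_one h3, div_div, mul_left_comm]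
          | rw [neg_div, neg_div, div_div]
    rw [tendsto_congr' hEq, hFdef]
    apply tendsto_pi_nhds.mpr
    intro i
    rw [tendsto_pi_nhds]
    intro j
    have e00 : Tendsto (fun k => (P k 1 0 / P k 0 0) / g k) atTop (𝓝 0) := by
      have := hC.div hg (by norm_num)
      norm_num at this; exact this
    have e01 : Tendsto (fun k => (P k 1 1 / P k 0 0 - 1) / (2 * g k)) atTop (𝓝 (1/2)) := by
      have h := (hD.sub (tendsto_const_nhds (x := (1:ℝ)))).div
        (((tendsto_const_nhds (x := (2:ℝ))).mul hg)) (by norm_num : (2:ℝ) * (-1) ≠ 0)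
      norm_num at h
      exact h
    have e11 : Tendsto (fun k => -(P k 0 1 / P k 0 0) / g k) atTop (𝓝 0) := by
      have := (hB.neg).div hg (by norm_num)
      norm_num at this; exact this
    fin_cases i <;> fin_cases j <;> simp <;>
      first | exact e00 | exact e11 | (simpa using e01)

lemma charpoly_fin_two' (M : Matrix (Fin 2) (Fin 2) ℝ) :
    M.charpoly = X ^ 2 - C M.trace * X + C M.det := by
  rw [Matrix.charpoly, Matrix.det_fin_two]
  simp [Matrix.charmatrix_apply_eq, Matrix.charmatrix_apply_ne, Matrix.trace_fin_two,
    Matrix.det_fin_two, _root_.map_add, _root_.map_mul, _root_.map_sub]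
  ring

lemma charpoly_of_det_neg (S : Matrix (Fin 2) (Fin 2) ℝ) (h : S.det < 0) :
    ∃ a b : ℝ, 0 < a ∧ b < 0 ∧ S.charpoly = (X - C a) * (X - C b) := by
  set t := S.trace
  set δ := S.det
  have hdisc : (0:ℝ) < t ^ 2 - 4 * δ := by nlinarith [sq_nonneg t]
  set s := Real.sqrt (t ^ 2 - 4 * δ) with hs
  have hs2 : s ^ 2 = t ^ 2 - 4 * δ := Real.sq_sqrt hdisc.le
  have hslt : |t| < s := by
    have : |t| = Real.sqrt (t ^ 2) := (Real.sqrt_sq_eq_abs t).symm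
    rw [this, hs]
    exact Real.sqrt_lt_sqrt (sq_nonneg t) (by linarith)
  have ht1 : -s < t := by have := neg_abs_le t; linarith
  have ht2 : t < s := by have := le_abs_self t; linarith
  refine ⟨(t + s) / 2, (t - s) / 2, by linarith, by linarith, ?_⟩
  have hab : (t + s) / 2 * ((t - s) / 2) = δ := by nlinarith [hs2]
  have hsum : (t + s) / 2 + (t - s) / 2 = t := by ring
  rw [charpoly_fin_two']
  have : (X - C ((t + s) / 2)) * (X - C ((t - s) / 2)) =
      X ^ 2 - C ((t + s) / 2 + (t - s) / 2) * X + C ((t + s) / 2 * ((t - s) / 2)) := by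
    simp [_root_.map_add, _root_.map_mul]; ring
  rw [this, hsum, hab]

/-- (a) For `P` with `det P = 1` and `I − P` invertible, the Cayley transform `M_P` is
symmetric. (b) If `P(k)` is a family with `det P(k) = 1` whose `(1,1)`-entry `a(k)`
satisfies `|a(k)| → ∞` while the other entries are `o(a(k))`, then `I − P(k)` is
invertible for large `k` and `M_{P(k)} → [[0,1/2],[1/2,0]]`. (c) For two such families,
`M_{P(k)} + M_{Q(k)}` eventually has negative determinant, hence one positive and one
negative eigenvalue, so its signature is zero. -/
theorem stmt11 :
    (∀ P : Matrix (Fin 2) (Fin 2) ℝ, P.det = 1 → IsUnit (1 - P) →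
      (cayley P)ᵀ = cayley P) ∧
    (∀ P : ℕ → Matrix (Fin 2) (Fin 2) ℝ,
      (∀ k, (P k).det = 1) →
      Tendsto (fun k => |P k 0 0|) atTop atTop →
      Tendsto (fun k => P k 0 1 / P k 0 0) atTop (𝓝 0) →
      Tendsto (fun k => P k 1 0 / P k 0 0) atTop (𝓝 0) →
      Tendsto (fun k => P k 1 1 / P k 0 0) atTop (𝓝 0) →
      (∃ k₀ : ℕ, ∀ k : ℕ, k₀ ≤ k → IsUnit (1 - P k)) ∧
      Tendsto (fun k => cayley (P k)) atTop
        (𝓝 (!![0, 1 / 2; 1 / 2, 0] : Matrix (Fin 2) (Fin 2) ℝ))) ∧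
    (∀ P Q : ℕ → Matrix (Fin 2) (Fin 2) ℝ,
      (∀ k, (P k).det = 1) → (∀ k, (Q k).det = 1) →
      Tendsto (fun k => |P k 0 0|) atTop atTop →
      Tendsto (fun k => P k 0 1 / P k 0 0) atTop (𝓝 0) →
      Tendsto (fun k => P k 1 0 / P k 0 0) atTop (𝓝 0) →
      Tendsto (fun k => P k 1 1 / P k 0 0) atTop (𝓝 0) →
      Tendsto (fun k => |Q k 0 0|) atTop atTop →
      Tendsto (fun k => Q k 0 1 / Q k 0 0) atTop (𝓝 0) →
      Tendsto (fun k => Q k 1 0 / Q k 0 0) atTop (𝓝 0) →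
      Tendsto (fun k => Q k 1 1 / Q k 0 0) atTop (𝓝 0) →
      ∃ k₀ : ℕ, ∀ k : ℕ, k₀ ≤ k →
        (cayley (P k) + cayley (Q k)).det < 0 ∧
        ∃ a b : ℝ, 0 < a ∧ b < 0 ∧
          (cayley (P k) + cayley (Q k)).charpoly =
            (X - Polynomial.C a) * (X - Polynomial.C b)) := by
  refine ⟨?_, ?_, ?_⟩
  · intro P hdet hU
    have h := (Matrix.isUnit_iff_isUnit_det _).mp hU
    rw [det_one_sub _ hdet] at h
    have hΔ := isUnit_iff_ne_zero.mp h
    rw [cayley_eq _ hdet hΔ]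
    ext i j
    fin_cases i <;> fin_cases j <;> simp
  · intro P hdet hA hB hC hD
    obtain ⟨h1, h2⟩ := partb P hdet hA hB hC hD
    obtain ⟨k₀, hk⟩ := eventually_atTop.mp h1
    exact ⟨⟨k₀, hk⟩, h2⟩
  · intro P Q hdP hdQ hA hB hC hD hA' hB' hC' hD'
    have hP := (partb P hdP hA hB hC hD).2
    have hQ := (partb Q hdQ hA' hB' hC' hD').2
    set L : Matrix (Fin 2) (Fin 2) ℝ := !![0, 1; 1, 0] with hLdef
    have hL : (!![0, 1/2; 1/2, 0] : Matrix (Fin 2) (Fin 2) ℝ) + !![0, 1/2; 1/2, 0] = L := by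
      ext i j
      fin_cases i <;> fin_cases j <;> norm_num [hLdef]
    have hsum := hP.add hQ
    rw [hL] at hsum
    have he : ∀ i j, Tendsto (fun k => (cayley (P k) + cayley (Q k)) i j) atTop (𝓝 (L i j)) :=
      fun i j => tendsto_pi_nhds.mp (tendsto_pi_nhds.mp hsum i) j
    have hdt : Tendsto (fun k => (cayley (P k) + cayley (Q k)).det) atTop (𝓝 (-1)) := by
      have h := ((he 0 0).mul (he 1 1)).sub ((he 0 1).mul (he 1 0))
      have hv : L 0 0 * L 1 1 - L 0 1 * L 1 0 = -1 := by norm_num [hLdef]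
      rw [hv] at h
      simpa [Matrix.det_fin_two] using h
    have hneg := hdt.eventually_lt_const (show (-1:ℝ) < 0 by norm_num)
    obtain ⟨k₀, hk⟩ := eventually_atTop.mp hneg
    exact ⟨k₀, fun k hkk => ⟨hk k hkk, charpoly_of_det_neg _ (hk k hkk)⟩⟩
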